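/- For a closed conversion C (a unit conversion with C = C*), convertibility ∝_C and coherence ≅_C are group congruences on Unit: both are equivalence relations, and both are compatible with the group structure (if u ∝_C v and u' ∝_C v' then (u+u') ∝_C (v+v') and (−u) ∝_C (−v), and likewise for ≅_C). -/
import Mathlib


open Finsupp

/-- The positive rationals, as a multiplicative group. -/
abbrev Ratio : Type := {q : ℚ // 0 < q}

/-- Prefixes: the free abelian group over base prefixes `P`. -/
abbrev PrefG (P : Type*) : Type _ := P →₀ ℤ
/-- Root units: the free abelian group over base units `B`. -/
abbrev RootG (B : Type*) : Type _ := B →₀ ℤ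
/-- Units: the free abelian group over preunits (prefix, base unit). -/
abbrev UnitG (P B : Type*) : Type _ := ((P →₀ ℤ) × B) →₀ ℤ

variable {P B D : Type*}

/-- The root of a unit: forget all prefixes. -/
noncomputable def rootU (u : UnitG P B) : RootG B :=
  Finsupp.mapDomain Prod.snd u

/-- Embed a root unit back into the units, with empty prefixes. -/
noncomputable def unrootU (f : RootG B) : UnitG P B :=
  Finsupp.mapDomain (fun b => ((0 : PrefG P), b)) f

/-- Strip all prefixes from a unit. -/
noncomputable def stripU (u : UnitG P B) : UnitG P B := unrootU (rootU u)

/-- The value of a prefix, given values of base prefixes. -/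
noncomputable def valP (val₀ : P → Ratio) (f : PrefG P) : Ratio :=
  ∏ p ∈ f.support, val₀ p ^ (f p)

/-- The prefix value of a unit. -/
noncomputable def pvalU (val₀ : P → Ratio) (g : UnitG P B) : Ratio :=
  ∏ x ∈ g.support, valP val₀ x.1 ^ (g x)

/-- The dimension of a root unit, given dimensions of base units. -/
noncomputable def dimRoot (dim₀ : B → D →₀ ℤ) (f : RootG B) : D →₀ ℤ :=
  ∑ b ∈ f.support, f b • dim₀ b

/-- The dimension of a unit. -/
noncomputable def dimU (dim₀ : B → D →₀ ℤ) (u : UnitG P B) : D →₀ ℤ :=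
  dimRoot dim₀ (rootU u)

/-- The combined prefix of a unit. -/
noncomputable def prefU (u : UnitG P B) : PrefG P :=
  ∑ x ∈ u.support, u x • x.1

/-- Normalization of a unit. -/
noncomputable def normU (u : UnitG P B) : PrefG P × RootG B :=
  (prefU u, rootU u)

/-- Evaluation of a unit. -/
noncomputable def evalU (val₀ : P → Ratio) (u : UnitG P B) : Ratio × RootG B :=
  (pvalU val₀ u, rootU u)

/-- A unit conversion: dimensionally consistent and functional in the ratio. -/
def IsConversion (dim₀ : B → D →₀ ℤ) (C : Set (UnitG P B × Ratio × UnitG P B)) : Prop :=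
  (∀ u r v, (u, r, v) ∈ C → dimU dim₀ u = dimU dim₀ v) ∧
  (∀ u r r' v, (u, r, v) ∈ C → (u, r', v) ∈ C → r = r')

/-- The closure rules for unit conversions. -/
inductive ClosureRel {P B : Type*} (val₀ : P → Ratio)
    (C : Set (UnitG P B × Ratio × UnitG P B)) :
    UnitG P B → Ratio → UnitG P B → Prop
  | base {u r v} : (u, r, v) ∈ C → ClosureRel val₀ C u r v
  | mul {u r v u' r' v'} : ClosureRel val₀ C u r v → ClosureRel val₀ C u' r' v' →
      ClosureRel val₀ C (u + u') (r * r') (v + v')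
  | inv {u r v} : ClosureRel val₀ C u r v → ClosureRel val₀ C (-u) r⁻¹ (-v)
  | pe (u : UnitG P B) : ClosureRel val₀ C u (pvalU val₀ u) (stripU u)
  | pe' (u : UnitG P B) : ClosureRel val₀ C (stripU u) (pvalU val₀ u)⁻¹ u

/-- The conversion closure: the smallest relation containing `C` closed under the rules. -/
def convClosure (val₀ : P → Ratio) (C : Set (UnitG P B × Ratio × UnitG P B)) :
    Set (UnitG P B × Ratio × UnitG P B) :=
  {t | ClosureRel val₀ C t.1 t.2.1 t.2.2}

/-- Convertibility with respect to a conversion. -/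
def Convertible (C : Set (UnitG P B × Ratio × UnitG P B)) (u v : UnitG P B) : Prop :=
  ∃ r, (u, r, v) ∈ C

/-- Coherence with respect to a conversion. -/
def Coherent (C : Set (UnitG P B × Ratio × UnitG P B)) (u v : UnitG P B) : Prop :=
  (u, (1 : Ratio), v) ∈ C

/-- The unit `δu₀` corresponding to a base unit. -/
noncomputable def deltaB (P : Type*) {B : Type*} (u₀ : B) : UnitG P B :=
  Finsupp.single ((0 : PrefG P), u₀) 1

/-- A defining conversion: basic and functional in its first component. -/
def IsDefining (C : Set (UnitG P B × Ratio × UnitG P B)) : Prop :=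
  (∀ u r v, (u, r, v) ∈ C → ∃ u₀ : B, u = deltaB P u₀) ∧
  (∀ u r v r' v', (u, r, v) ∈ C → (u, r', v') ∈ C → v = v')

/-- One-step dependency between base units. -/
def Depends (C : Set (UnitG P B × Ratio × UnitG P B)) (u₀ v₀ : B) : Prop :=
  ∃ r v, (deltaB P u₀, r, v) ∈ C ∧ v₀ ∈ (rootU v).support

/-- The dependency order `>_C`. -/
def DepOrd (C : Set (UnitG P B × Ratio × UnitG P B)) : B → B → Prop :=
  Relation.TransGen (Depends C)

/-- The domain of a defining conversion. -/
def domC (C : Set (UnitG P B × Ratio × UnitG P B)) : Set B :=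
  {u₀ : B | ∃ r v, (deltaB P u₀, r, v) ∈ C}


/-- Definition expansion. -/
noncomputable def xpd (C : Set (UnitG P B × Ratio × UnitG P B)) (u₀ : B) :
    Ratio × UnitG P B :=
  haveI := Classical.propDecidable (∃ rv : Ratio × UnitG P B, (deltaB P u₀, rv.1, rv.2) ∈ C)
  if h : ∃ rv : Ratio × UnitG P B, (deltaB P u₀, rv.1, rv.2) ∈ C then h.choose
  else (1, deltaB P u₀)

/-- The base rewriting map. -/
noncomputable def rwrB (val₀ : P → Ratio) (C : Set (UnitG P B × Ratio × UnitG P B))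
    (u₀ : B) : Ratio × RootG B :=
  ((xpd C u₀).1 * pvalU val₀ (xpd C u₀).2, rootU (xpd C u₀).2)

/-- One rewriting step on evaluated units. -/
noncomputable def rwrStep (val₀ : P → Ratio) (C : Set (UnitG P B × Ratio × UnitG P B)) :
    Ratio × RootG B → Ratio × RootG B :=
  fun p => (p.1 * ∏ b ∈ p.2.support, (rwrB val₀ C b).1 ^ (p.2 b),
            ∑ b ∈ p.2.support, p.2 b • (rwrB val₀ C b).2)



lemma rootU_unrootU (f : RootG B) : rootU (unrootU (P := P) f) = f := by
  unfold rootU unrootU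
  rw [← Finsupp.mapDomain_comp]
  simp [Function.comp, Finsupp.mapDomain_id]

lemma strip_strip (u : UnitG P B) : stripU (stripU u) = stripU u := by
  unfold stripU
  rw [rootU_unrootU]

lemma valP_zero (val₀ : P → Ratio) : valP val₀ (0 : PrefG P) = 1 := by
  simp [valP]

lemma pval_unroot (val₀ : P → Ratio) (f : RootG B) :
    pvalU val₀ (unrootU (P := P) f) = 1 := by
  unfold pvalU
  apply Finset.prod_eq_one
  intro x hx
  classical
  have hx' := Finsupp.mapDomain_support (f := fun b => ((0 : PrefG P), b)) hx
  simp only [Finset.mem_image] at hx'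
  obtain ⟨b, _, rfl⟩ := hx'
  rw [valP_zero]
  ext
  rw [Positive.coe_zpow]
  norm_num

lemma pval_strip (val₀ : P → Ratio) (u : UnitG P B) :
    pvalU val₀ (stripU u) = 1 := pval_unroot val₀ (rootU u)

lemma ClosureRel.cast {val₀ : P → Ratio} {C : Set (UnitG P B × Ratio × UnitG P B)}
    {u r v u' r' v'} (h : ClosureRel val₀ C u r v)
    (hu : u = u') (hr : r = r') (hv : v = v') : ClosureRel val₀ C u' r' v' := by
  subst hu; subst hr; subst hv; exact h

lemma diag (val₀ : P → Ratio) (C : Set (UnitG P B × Ratio × UnitG P B)) (x : UnitG P B) :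
    ClosureRel val₀ C x 1 x := by
  have h3 := (ClosureRel.pe (val₀ := val₀) (C := C) x).mul (ClosureRel.pe' (val₀ := val₀) (C := C) x)
  have h4 := ClosureRel.pe (val₀ := val₀) (C := C) (stripU x)
  rw [pval_strip, strip_strip] at h4
  have h6 := h3.mul h4.inv
  exact h6.cast (show x + stripU x + -stripU x = x by abel) (by group)
    (show stripU x + x + -stripU x = x by abel)

/-- For closed conversions, convertibility and coherence are group congruences:
equivalence relations compatible with addition and negation on units. -/
theorem convertible_coherent_congruences {P B D : Type*} (val₀ : P → Ratio)
    (dim₀ : B → D →₀ ℤ) (C : Set (UnitG P B × Ratio × UnitG P B))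
    (hC : IsConversion dim₀ C) (hcl : C = convClosure val₀ C) :
    Equivalence (Convertible C) ∧ Equivalence (Coherent C) ∧
    (∀ u v u' v' : UnitG P B, Convertible C u v → Convertible C u' v' →
      Convertible C (u + u') (v + v')) ∧
    (∀ u v : UnitG P B, Convertible C u v → Convertible C (-u) (-v)) ∧
    (∀ u v u' v' : UnitG P B, Coherent C u v → Coherent C u' v' →
      Coherent C (u + u') (v + v')) ∧
    (∀ u v : UnitG P B, Coherent C u v → Coherent C (-u) (-v)) := by
  have mem : ∀ {u r v : _}, ClosureRel val₀ C u r v → (u, r, v) ∈ C := by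
    intro u r v h; rw [hcl]; exact h
  have mem' : ∀ {u : UnitG P B} {r v}, (u, r, v) ∈ C → ClosureRel val₀ C u r v :=
    fun h => ClosureRel.base h
  have hsymm : ∀ {u r v : _}, ClosureRel val₀ C u r v → ClosureRel val₀ C v r⁻¹ u := by
    intro u r v h
    exact ((h.inv.mul (diag val₀ C u)).mul (diag val₀ C v)).cast
      (show -u + u + v = v by abel) (by group) (show -v + u + v = u by abel)
  have htrans : ∀ {u r v s w : _}, ClosureRel val₀ C u r v → ClosureRel val₀ C v s w →
      ClosureRel val₀ C u (r * s) w := by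
    intro u r v s w h1 h2
    exact ((h1.mul h2).mul (diag val₀ C v).inv).cast
      (show u + v + -v = u by abel) (by group) (show v + w + -v = w by abel)
  refine ⟨⟨fun u => ⟨1, mem (diag val₀ C u)⟩, ?_, ?_⟩,
    ⟨fun u => mem (diag val₀ C u), ?_, ?_⟩, ?_, ?_, ?_, ?_⟩
  · rintro u v ⟨r, h⟩
    exact ⟨r⁻¹, mem (hsymm (mem' h))⟩
  · rintro u v w ⟨r, h1⟩ ⟨s, h2⟩
    exact ⟨r * s, mem (htrans (mem' h1) (mem' h2))⟩
  · intro u v h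
    exact mem ((hsymm (mem' h)).cast rfl inv_one rfl)
  · intro u v w h1 h2
    exact mem ((htrans (mem' h1) (mem' h2)).cast rfl (one_mul 1) rfl)
  · rintro u v u' v' ⟨r, h⟩ ⟨r', h'⟩
    exact ⟨r * r', mem ((mem' h).mul (mem' h'))⟩
  · rintro u v ⟨r, h⟩
    exact ⟨r⁻¹, mem (mem' h).inv⟩
  · intro u v u' v' h h'
    exact mem (((mem' h).mul (mem' h')).cast rfl (one_mul 1) rfl)
  · intro u v h
    exact mem ((mem' h).inv.cast rfl inv_one rfl)
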